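/- Under the Dawid–Skene model with a decomposable aggregation rule: for every item j, if τ_j^min ≥ 0, then P(ŷ_j ≠ y_j) ≤ (L−1)·min{ exp(−(τ_j^min)²/2), exp(−(τ_j^min)²/(2·(σ² + c·τ_j^min/3))) }. -/

import Mathlib

/-! An error `ŷ_j ≠ y_j = k` forces some `l ≠ k` with `s_j(l) ≥ s_j(k)`, so a union bound over the
pairs `k ≠ l`, weighted by the prior `π_k`, reduces the claim to bounding
`P(y_j = k, s_j(l) ≥ s_j(k))` by `π_k` times each exponential. Given `y_j = k` the workers'
labels are independent, so the Chernoff bound with parameter `λ ≥ 0` factorises into the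
moment generating functions of `f_i(l, Z_ij) − f_i(k, Z_ij)`, whose means add up to
`−Δ_j(k,l) ≤ −τ_j^min N̄`. Hoeffding's lemma (the `i`-th difference has range `b_i`, and
`∑ b_i² = N̄²`) with `λ = τ/N̄` gives `exp(−τ²/2)`. Bernstein's bound
`e^{λv} ≤ 1 + λv + v² (e^{λB} − 1 − λB)/B²` for `v ≤ B = c N̄`, together with
`(1 − u/3)(e^u − 1 − u) ≤ u²/2`, gives `exp(−τ²/(2d))` for `λ = τ/(N̄ d)`, `d = σ² + cτ/3`.
-/

open MeasureTheory ProbabilityTheory Real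

noncomputable section

namespace CrowdDS

/-- Conditional law of the label `Z i j` (valued in `Fin (L+1)`, `0` = missing) given the
true label `y j = k`, under the general Dawid–Skene model with assignment probabilities `q`
and confusion matrices `p` (where `p i k h` is the probability of reporting label `h.succ`
given true label `k`). -/
def condLaw {M N L : ℕ} (q : Fin M → Fin N → ℝ) (p : Fin M → Fin L → Fin L → ℝ)
    (i : Fin M) (j : Fin N) (k : Fin L) (h : Fin (L + 1)) : ℝ :=
  if hz : h = 0 then 1 - q i j else q i j * p i k (h.pred hz)

/-- The normalizing quantity `N̄`. -/
def nbar {M L : ℕ} (f : Fin M → Fin L → Fin (L + 1) → ℝ) : ℝ :=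
  Real.sqrt (∑ i, (sSup {x : ℝ | ∃ k l h : Fin L, k ≠ l ∧
    x = |f i k h.succ - f i l h.succ|}) ^ 2)

/-- Expected gap `Δ_j(k,l)` of the aggregated scores. -/
def gap {M N L : ℕ} (f : Fin M → Fin L → Fin (L + 1) → ℝ) (a : Fin L → ℝ)
    (q : Fin M → Fin N → ℝ) (p : Fin M → Fin L → Fin L → ℝ)
    (j : Fin N) (k l : Fin L) : ℝ :=
  (∑ i, ∑ h : Fin L, q i j * (f i k h.succ - f i l h.succ) * p i k h) + (a k - a l)

/-- `τ_j^min`. -/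
def tauMin {M N L : ℕ} (f : Fin M → Fin L → Fin (L + 1) → ℝ) (a : Fin L → ℝ)
    (q : Fin M → Fin N → ℝ) (p : Fin M → Fin L → Fin L → ℝ) (j : Fin N) : ℝ :=
  sInf {x : ℝ | ∃ k l : Fin L, k ≠ l ∧ x = gap f a q p j k l / nbar f}

/-- `τ_j^max`. -/
def tauMax {M N L : ℕ} (f : Fin M → Fin L → Fin (L + 1) → ℝ) (a : Fin L → ℝ)
    (q : Fin M → Fin N → ℝ) (p : Fin M → Fin L → Fin L → ℝ) (j : Fin N) : ℝ :=
  sSup {x : ℝ | ∃ k l : Fin L, k ≠ l ∧ x = gap f a q p j k l / nbar f}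

/-- `t̄ = min_j τ_j^min`. -/
def tbar {M N L : ℕ} (f : Fin M → Fin L → Fin (L + 1) → ℝ) (a : Fin L → ℝ)
    (q : Fin M → Fin N → ℝ) (p : Fin M → Fin L → Fin L → ℝ) : ℝ :=
  sInf {x : ℝ | ∃ j : Fin N, x = tauMin f a q p j}

/-- `t̃ = max_j τ_j^max`. -/
def ttil {M N L : ℕ} (f : Fin M → Fin L → Fin (L + 1) → ℝ) (a : Fin L → ℝ)
    (q : Fin M → Fin N → ℝ) (p : Fin M → Fin L → Fin L → ℝ) : ℝ :=
  sSup {x : ℝ | ∃ j : Fin N, x = tauMax f a q p j}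

/-- The constant `c`. -/
def cConst {M L : ℕ} (f : Fin M → Fin L → Fin (L + 1) → ℝ) : ℝ :=
  (1 / nbar f) * sSup {x : ℝ | ∃ (i : Fin M) (k l h : Fin L), k ≠ l ∧
    x = |f i k h.succ - f i l h.succ|}

/-- The variance proxy `σ²`. -/
def sigmaSq {M N L : ℕ} (f : Fin M → Fin L → Fin (L + 1) → ℝ)
    (q : Fin M → Fin N → ℝ) (p : Fin M → Fin L → Fin L → ℝ) : ℝ :=
  (1 / (nbar f) ^ 2) * sSup {x : ℝ | ∃ (j : Fin N) (k l : Fin L), k ≠ l ∧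
    x = ∑ i, ∑ h : Fin L, q i j * (f i k h.succ - f i l h.succ) ^ 2 * p i k h}

/-- The error rate `E_N`. -/
def errRate {Ω : Type*} {N L : ℕ} (y yhat : Fin N → Ω → Fin L) (ω : Ω) : ℝ :=
  (N : ℝ)⁻¹ * ∑ j, if yhat j ω ≠ y j ω then (1 : ℝ) else 0

/-- `φ(x) = exp(−x²/2)`. -/
def phi (x : ℝ) : ℝ := Real.exp (-x ^ 2 / 2)

/-- Kullback–Leibler divergence between Bernoulli distributions. -/
def klBer (x y : ℝ) : ℝ := x * Real.log (x / y) + (1 - x) * Real.log ((1 - x) / (1 - y))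

end CrowdDS

open Finset

lemma nonneg_of_hasDerivAt_of_map_zero {f f' : ℝ → ℝ} (hf : ∀ x, HasDerivAt f (f' x) x)
    (h0 : f 0 = 0) (hf' : ∀ x, 0 ≤ x → 0 ≤ f' x) {x : ℝ} (hx : 0 ≤ x) : 0 ≤ f x := by
  have hmono : MonotoneOn f (Set.Ici 0) :=
    monotoneOn_of_hasDerivWithinAt_nonneg (convex_Ici 0)
      (fun y _ => (hf y).continuousAt.continuousWithinAt)
      (fun y _ => (hf y).hasDerivWithinAt) (fun y hy => hf' y (interior_subset hy))
  simpa [h0] using hmono Set.self_mem_Ici hx hx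

lemma one_sub_div_three_mul_exp_sub_le {u : ℝ} (hu : 0 ≤ u) :
    (1 - u / 3) * (exp u - 1 - u) ≤ u ^ 2 / 2 := by
  have hψ {u : ℝ} (hu : 0 ≤ u) : 0 ≤ (u - 2) * exp u + u + 2 := by
    refine nonneg_of_hasDerivAt_of_map_zero (f := fun u => (u - 2) * exp u + u + 2)
      (f' := fun u => (u - 1) * exp u + 1) (fun u => ?_) (by simp) (fun u _ => ?_) hu
    · exact ((((hasDerivAt_id' u).sub_const 2).mul (hasDerivAt_exp u)).add
        (hasDerivAt_id' u) |>.add_const 2).congr_deriv (by ring)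
    · have := add_one_le_exp (-u)
      have : exp (-u) * exp u = 1 := by rw [← exp_add, neg_add_cancel, exp_zero]
      nlinarith [exp_pos u]
  have key := nonneg_of_hasDerivAt_of_map_zero
    (f := fun u => u ^ 2 / 2 - (1 - u / 3) * (exp u - 1 - u))
    (f' := fun u => ((u - 2) * exp u + u + 2) / 3) (fun u => ?_) (by simp)
    (fun u hu => div_nonneg (hψ hu) zero_le_three) hu
  · simpa using key
  · exact (((hasDerivAt_pow 2 u).div_const 2).sub (((hasDerivAt_const u 1).sub
      ((hasDerivAt_id' u).div_const 3)).mul (((hasDerivAt_exp u).sub_const 1).sub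
      (hasDerivAt_id' u)))).congr_deriv (by simp only [Pi.sub_apply]; push_cast; ring)

lemma neg_mul_add_mul_exp_sub_le {σ c t n B g V : ℝ} (hn : 0 < n) (hB : 0 < B)
    (hc : c * n = B) (ht : 0 ≤ t) (hd : 0 < σ + c * t / 3) (hg : t * n ≤ g)
    (hV : V ≤ σ * n ^ 2) :
    -(t / (n * (σ + c * t / 3)) * g) + V * (exp (t / (n * (σ + c * t / 3)) * B) - 1
      - t / (n * (σ + c * t / 3)) * B) / B ^ 2 ≤ -t ^ 2 / (2 * (σ + c * t / 3)) := by
  set d := σ + c * t / 3 with hd_def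
  set lam := t / (n * d)
  set G := exp (lam * B) - 1 - lam * B
  have hlam : 0 ≤ lam := div_nonneg ht (mul_pos hn hd).le
  have hbennett : σ * G ≤ (lam * B) ^ 2 / 2 * d := by
    have hu : lam * B * d = c * t := by simp only [lam, ← hc]; field_simp
    have hσ : σ = (1 - lam * B / 3) * d := by linear_combination (1 / 3) * hu - hd_def
    rw [hσ, mul_right_comm]
    exact mul_le_mul_of_nonneg_right
      (one_sub_div_three_mul_exp_sub_le (mul_nonneg hlam hB.le)) hd.le
  have hG : 0 ≤ G := by linarith [add_one_le_exp (lam * B)]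
  have hvar : V * G / B ^ 2 ≤ t ^ 2 / (2 * d) :=
    calc V * G / B ^ 2 ≤ σ * n ^ 2 * G / B ^ 2 := by gcongr
      _ = σ * G * (n ^ 2 / B ^ 2) := by ring
      _ ≤ (lam * B) ^ 2 / 2 * d * (n ^ 2 / B ^ 2) := by gcongr
      _ = t ^ 2 / (2 * d) := by simp only [lam]; field_simp
  have hgap : t ^ 2 / d ≤ lam * g := by
    calc t ^ 2 / d = lam * (t * n) := by simp only [lam]; field_simp
      _ ≤ lam * g := mul_le_mul_of_nonneg_left hg hlam
  have : t ^ 2 / d = 2 * (t ^ 2 / (2 * d)) := by field_simp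
  rw [neg_div]
  linarith

lemma mul_exp_mul_sub_one_le {B t v : ℝ} (hB : 0 < B) (hv : v ≤ B) :
    v * (exp (t * v) - 1) ≤ v ^ 2 * (exp (t * B) - 1) / B := by
  rcases le_or_gt 0 v with hv0 | hv0
  · -- chord of `exp` over `[0, t * B]`
    have hconv := convexOn_exp.2 (Set.mem_univ 0) (Set.mem_univ (t * B))
      (sub_nonneg.2 ((div_le_one hB).2 hv)) (div_nonneg hv0 hB.le) (sub_add_cancel 1 (v / B))
    have harg : v / B * (t * B) = t * v := by field_simp
    simp only [smul_eq_mul, mul_zero, zero_add, exp_zero, harg] at hconv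
    calc v * (exp (t * v) - 1) ≤ v * (v / B * (exp (t * B) - 1)) := by gcongr; linarith
      _ = v ^ 2 * (exp (t * B) - 1) / B := by ring
  · have htB : t ≤ (exp (t * B) - 1) / B := by
      rw [le_div_iff₀ hB]; linarith [add_one_le_exp (t * B)]
    calc v * (exp (t * v) - 1) ≤ t * v ^ 2 := by nlinarith [add_one_le_exp (t * v)]
      _ ≤ (exp (t * B) - 1) / B * v ^ 2 := by gcongr
      _ = v ^ 2 * (exp (t * B) - 1) / B := by ring

lemma exp_mul_sub_one_sub_le {B t v : ℝ} (hB : 0 < B) (ht : 0 ≤ t) (hv : v ≤ B) :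
    exp (t * v) - 1 - t * v ≤ v ^ 2 * (exp (t * B) - 1 - t * B) / B ^ 2 := by
  have key := nonneg_of_hasDerivAt_of_map_zero
    (f := fun s => v ^ 2 * (exp (s * B) - 1 - s * B) / B ^ 2 - (exp (s * v) - 1 - s * v))
    (f' := fun s => v ^ 2 * (exp (s * B) - 1) / B - v * (exp (s * v) - 1)) (fun s => ?_)
    (by simp) (fun s _ => sub_nonneg.2 (mul_exp_mul_sub_one_le hB hv)) ht
  · simpa using key
  · have hB' := hasDerivAt_mul_const (x := s) B
    have hv' := hasDerivAt_mul_const (x := s) v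
    exact ((((hB'.exp.sub_const 1).sub hB').const_mul (v ^ 2)).div_const (B ^ 2)).sub
      ((hv'.exp.sub_const 1).sub hv') |>.congr_deriv (by field_simp)

lemma sum_mul_exp_le_of_le {ι : Type*} [Fintype ι] {w v : ι → ℝ} (hw : ∀ x, 0 ≤ w x)
    (hw1 : ∑ x, w x = 1) {B t : ℝ} (hB : 0 < B) (ht : 0 ≤ t) (hv : ∀ x, v x ≤ B) :
    ∑ x, w x * exp (t * v x) ≤
      exp (t * ∑ x, w x * v x + (∑ x, w x * v x ^ 2) * (exp (t * B) - 1 - t * B) / B ^ 2) := by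
  calc ∑ x, w x * exp (t * v x)
      = ∑ x, w x * (1 + t * v x + (exp (t * v x) - 1 - t * v x)) := by congr! 2; ring
    _ ≤ ∑ x, w x * (1 + t * v x + v x ^ 2 * (exp (t * B) - 1 - t * B) / B ^ 2) := by
        gcongr with x
        · exact hw x
        · exact exp_mul_sub_one_sub_le hB ht (hv x)
    _ = (t * ∑ x, w x * v x + (∑ x, w x * v x ^ 2) * (exp (t * B) - 1 - t * B) / B ^ 2)
          + ∑ x, w x := by
        rw [mul_sum, sum_mul, sum_div, ← sum_add_distrib, ← sum_add_distrib]
        exact sum_congr rfl fun x _ => by ring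
    _ ≤ _ := by rw [hw1]; exact add_one_le_exp _

lemma sum_mul_exp_le_of_abs_le {ι : Type*} [Fintype ι] {w v : ι → ℝ} (hw : ∀ x, 0 ≤ w x)
    (hw1 : ∑ x, w x = 1) {b : ℝ} (hv : ∀ x, |v x| ≤ b) (t : ℝ) :
    ∑ x, w x * exp (t * v x) ≤ exp (t * ∑ x, w x * v x + t ^ 2 * b ^ 2 / 2) := by
  classical
  let _ : MeasurableSpace ι := ⊤
  let ν : Measure ι := ∑ x, ENNReal.ofReal (w x) • Measure.dirac x
  have : IsProbabilityMeasure ν := ⟨by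
    simp [ν, ← ENNReal.ofReal_sum_of_nonneg (fun x _ => hw x), hw1]⟩
  have hint (g : ι → ℝ) : ∫ x, g x ∂ν = ∑ x, w x * g x := by
    rw [integral_fintype .of_finite]
    exact sum_congr rfl fun x _ => by simp [ν, measureReal_def, Set.indicator, hw]
  have hmgf := (hasSubgaussianMGF_of_mem_Icc (X := v) (a := -b) (b := b) (μ := ν)
    (measurable_of_finite v).aemeasurable (ae_of_all _ fun x => abs_le.mp (hv x))).mgf_le t
  have hc : (((‖b - -b‖₊ / 2) ^ 2 : NNReal) : ℝ) = b ^ 2 := by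
    simp only [NNReal.coe_pow, NNReal.coe_div, coe_nnnorm, Real.norm_eq_abs, NNReal.coe_ofNat]
    rw [div_pow, sq_abs]; ring
  simp only [mgf, hint, hc] at hmgf
  calc ∑ x, w x * exp (t * v x)
      = exp (t * ∑ x, w x * v x) * ∑ x, w x * exp (t * (v x - ∑ x, w x * v x)) := by
        rw [mul_sum]
        exact sum_congr rfl fun x _ => by rw [mul_sub, exp_sub]; field_simp
    _ ≤ exp (t * ∑ x, w x * v x) * exp (b ^ 2 * t ^ 2 / 2) := by gcongr
    _ = exp (t * ∑ x, w x * v x + t ^ 2 * b ^ 2 / 2) := by rw [← exp_add]; ring_nf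

section Probability

variable {Ω : Type*} [MeasurableSpace Ω]

lemma measureReal_inter_preimage_eq_sum {β : Type*} [MeasurableSpace β]
    [MeasurableSingletonClass β] (μ : Measure Ω) [IsFiniteMeasure μ] {A : Set Ω}
    (hA : MeasurableSet A) {X : Ω → β} (hX : Measurable X) (S : Finset β) :
    μ.real (A ∩ X ⁻¹' S) = ∑ h ∈ S, μ.real (A ∩ X ⁻¹' {h}) := by
  simp only [Set.inter_comm A, ← measureReal_restrict_apply' hA]
  exact (sum_measureReal_preimage_singleton S fun h _ => hX (measurableSet_singleton h)).symm

lemma measureReal_sum_ge_le_prod_sum_mul_exp {ι α : Type*} [Fintype ι] [Fintype α]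
    [MeasurableSpace α] [MeasurableSingletonClass α] (μ : Measure Ω) [IsFiniteMeasure μ]
    {A : Set Ω} (hA : MeasurableSet A) {X : ι → Ω → α} (hX : ∀ i, Measurable (X i))
    {c : ℝ} {w : ι → α → ℝ}
    (hlaw : ∀ h : ι → α, μ.real {ω | ω ∈ A ∧ ∀ i, X i ω = h i} = c * ∏ i, w i (h i))
    (g : ι → α → ℝ) (b : ℝ) {t : ℝ} (ht : 0 ≤ t) :
    μ.real {ω | ω ∈ A ∧ b ≤ ∑ i, g i (X i ω)}
      ≤ c * exp (-(t * b)) * ∏ i, ∑ x, w i x * exp (t * g i x) := by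
  classical
  let G : (ι → α) → ℝ := fun h => ∑ i, g i (h i)
  have hset : {ω | ω ∈ A ∧ b ≤ ∑ i, g i (X i ω)}
      = A ∩ (fun ω i => X i ω) ⁻¹' ↑(univ.filter fun h => b ≤ G h) := by
    ext ω; simp [G]
  have hfiber (h : ι → α) : A ∩ (fun ω i => X i ω) ⁻¹' {h} = {ω | ω ∈ A ∧ ∀ i, X i ω = h i} := by
    ext ω; simp [funext_iff]
  rw [hset, measureReal_inter_preimage_eq_sum μ hA (measurable_pi_lambda _ hX), sum_filter]
  calc ∑ h, (if b ≤ G h then μ.real (A ∩ (fun ω i => X i ω) ⁻¹' {h}) else 0)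
      ≤ ∑ h, (c * ∏ i, w i (h i)) * exp (t * (G h - b)) := by
        refine sum_le_sum fun h _ => ?_
        rw [← hlaw, ← hfiber]
        split_ifs with hb
        · exact le_mul_of_one_le_right measureReal_nonneg
            (one_le_exp (mul_nonneg ht (sub_nonneg.2 hb)))
        · positivity
    _ = c * exp (-(t * b)) * ∑ h : ι → α, ∏ i, w i (h i) * exp (t * g i (h i)) := by
        rw [mul_sum]
        refine sum_congr rfl fun h _ => ?_
        rw [mul_sub, sub_eq_add_neg, exp_add, mul_sum, exp_sum, prod_mul_distrib]
        ring
    _ = c * exp (-(t * b)) * ∏ i, ∑ x, w i x * exp (t * g i x) := by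
        rw [prod_univ_sum, Fintype.piFinset_univ]

lemma measureReal_ne_le_card_sub_one_mul {α : Type*} [Fintype α] [MeasurableSpace α]
    [MeasurableSingletonClass α] (μ : Measure Ω) [IsProbabilityMeasure μ] {y ŷ : Ω → α}
    (hy : Measurable y) (E : α → α → Set Ω) (hE : ∀ ω, ŷ ω ≠ y ω → ω ∈ E (y ω) (ŷ ω))
    {r : ℝ} (hr : ∀ k l, k ≠ l → μ.real (E k l) ≤ μ.real (y ⁻¹' {k}) * r) :
    μ.real {ω | ŷ ω ≠ y ω} ≤ (Fintype.card α - 1) * r := by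
  classical
  calc μ.real {ω | ŷ ω ≠ y ω} ≤ μ.real (⋃ k ∈ univ, ⋃ l ∈ univ.erase k, E k l) :=
        measureReal_mono (fun ω hω => by
          simp only [Set.mem_iUnion]
          exact ⟨y ω, mem_univ _, ŷ ω, mem_erase.2 ⟨hω, mem_univ _⟩, hE ω hω⟩) (measure_ne_top _ _)
    _ ≤ ∑ k, ∑ l ∈ univ.erase k, μ.real (E k l) :=
        (measureReal_biUnion_finset_le _ _).trans
          (sum_le_sum fun k _ => measureReal_biUnion_finset_le _ _)
    _ ≤ ∑ k, ∑ l ∈ univ.erase k, μ.real (y ⁻¹' {k}) * r := by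
        gcongr with k _ l hl
        exact hr k l (ne_of_mem_erase hl).symm
    _ = (Fintype.card α - 1) * r * ∑ k, μ.real (y ⁻¹' {k}) := by
        rw [mul_sum]
        refine sum_congr rfl fun k _ => ?_
        rw [sum_const, card_erase_of_mem (mem_univ k), card_univ, nsmul_eq_mul,
          Nat.cast_pred (Fintype.card_pos_iff.2 ⟨k⟩)]
        ring
    _ = (Fintype.card α - 1) * r := by
        rw [sum_measureReal_preimage_singleton _ fun k _ => hy (measurableSet_singleton k),
          coe_univ, Set.preimage_univ, probReal_univ, mul_one]

end Probability

namespace CrowdDS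

variable {Ω : Type*} [MeasurableSpace Ω] {M N L : ℕ}

structure HasDawidSkeneLaw (μ : Measure Ω) (y : Fin N → Ω → Fin L)
    (Z : Fin M → Fin N → Ω → Fin (L + 1)) (pri : Fin L → ℝ) (q : Fin M → Fin N → ℝ)
    (p : Fin M → Fin L → Fin L → ℝ) : Prop where
  measurable_y : ∀ j, Measurable (y j)
  measurable_Z : ∀ i j, Measurable (Z i j)
  pri_nonneg : ∀ k, 0 ≤ pri k
  q_nonneg : ∀ i j, 0 ≤ q i j
  q_le_one : ∀ i j, q i j ≤ 1
  p_nonneg : ∀ i k h, 0 ≤ p i k h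
  sum_p : ∀ i k, ∑ h, p i k h = 1
  measureReal_eq : ∀ j k (h : Fin M → Fin (L + 1)),
    μ.real {ω | y j ω = k ∧ ∀ i, Z i j ω = h i} = pri k * ∏ i, condLaw q p i j k (h i)

def outscoredEvent (y : Fin N → Ω → Fin L) (Z : Fin M → Fin N → Ω → Fin (L + 1))
    (f : Fin M → Fin L → Fin (L + 1) → ℝ) (a : Fin L → ℝ) (j : Fin N) (k l : Fin L) : Set Ω :=
  {ω | y j ω = k ∧ (∑ i, f i k (Z i j ω)) + a k ≤ (∑ i, f i l (Z i j ω)) + a l}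

lemma condLaw_succ (q : Fin M → Fin N → ℝ) (p : Fin M → Fin L → Fin L → ℝ) (i : Fin M)
    (j : Fin N) (k h : Fin L) : condLaw q p i j k h.succ = q i j * p i k h := by
  rw [condLaw, dif_neg (Fin.succ_ne_zero h), Fin.pred_succ]

lemma sum_condLaw_mul (q : Fin M → Fin N → ℝ) (p : Fin M → Fin L → Fin L → ℝ) (i : Fin M)
    (j : Fin N) (k : Fin L) {g : Fin (L + 1) → ℝ} (hg : g 0 = 0) :
    ∑ x, condLaw q p i j k x * g x = ∑ h : Fin L, q i j * p i k h * g h.succ := by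
  simp [Fin.sum_univ_succ, hg, condLaw_succ]

namespace HasDawidSkeneLaw

variable {μ : Measure Ω} {y : Fin N → Ω → Fin L} {Z : Fin M → Fin N → Ω → Fin (L + 1)}
  {pri : Fin L → ℝ} {q : Fin M → Fin N → ℝ} {p : Fin M → Fin L → Fin L → ℝ}

lemma condLaw_nonneg (hDS : HasDawidSkeneLaw μ y Z pri q p) (i : Fin M) (j : Fin N) (k : Fin L)
    (x : Fin (L + 1)) : 0 ≤ condLaw q p i j k x := by
  unfold condLaw
  split
  · linarith [hDS.q_le_one i j]
  · exact mul_nonneg (hDS.q_nonneg i j) (hDS.p_nonneg _ _ _)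

lemma sum_condLaw (hDS : HasDawidSkeneLaw μ y Z pri q p) (i : Fin M) (j : Fin N) (k : Fin L) :
    ∑ x, condLaw q p i j k x = 1 := by
  simp [Fin.sum_univ_succ, condLaw, ← mul_sum, hDS.sum_p]

end HasDawidSkeneLaw

/-- `b_i`, so that `N̄ = √(∑ᵢ b_i²)`. -/
def workerRange (f : Fin M → Fin L → Fin (L + 1) → ℝ) (i : Fin M) : ℝ :=
  sSup {x : ℝ | ∃ k l h : Fin L, k ≠ l ∧ x = |f i k h.succ - f i l h.succ|}

/-- `B = maxᵢ b_i`, so that `c = B / N̄`. -/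
def scoreRange (f : Fin M → Fin L → Fin (L + 1) → ℝ) : ℝ :=
  sSup {x : ℝ | ∃ (i : Fin M) (k l h : Fin L), k ≠ l ∧ x = |f i k h.succ - f i l h.succ|}

variable (f : Fin M → Fin L → Fin (L + 1) → ℝ) {k l : Fin L}

lemma abs_sub_le_workerRange (i : Fin M) (hkl : k ≠ l) (h : Fin L) :
    |f i k h.succ - f i l h.succ| ≤ workerRange f i :=
  le_csSup ((Set.finite_range fun z : Fin L × Fin L × Fin L =>
      |f i z.1 z.2.2.succ - f i z.2.1 z.2.2.succ|).subset
    (by rintro x ⟨k, l, h, -, rfl⟩; exact ⟨(k, l, h), rfl⟩)).bddAbove ⟨k, l, h, hkl, rfl⟩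

lemma abs_sub_le_scoreRange (i : Fin M) (hkl : k ≠ l) (h : Fin L) :
    |f i k h.succ - f i l h.succ| ≤ scoreRange f :=
  le_csSup ((Set.finite_range fun z : Fin M × Fin L × Fin L × Fin L =>
      |f z.1 z.2.1 z.2.2.2.succ - f z.1 z.2.2.1 z.2.2.2.succ|).subset
    (by rintro x ⟨i, k, l, h, -, rfl⟩; exact ⟨(i, k, l, h), rfl⟩)).bddAbove ⟨i, k, l, h, hkl, rfl⟩

lemma workerRange_nonneg (i : Fin M) (hkl : k ≠ l) : 0 ≤ workerRange f i :=
  (abs_nonneg _).trans (abs_sub_le_workerRange f i hkl k)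

lemma workerRange_le_scoreRange (i : Fin M) (hkl : k ≠ l) : workerRange f i ≤ scoreRange f :=
  csSup_le ⟨_, k, l, k, hkl, rfl⟩ fun _ ⟨_, _, h, hkl', hx⟩ =>
    hx ▸ abs_sub_le_scoreRange f i hkl' h

lemma nbar_sq : nbar f ^ 2 = ∑ i, workerRange f i ^ 2 :=
  Real.sq_sqrt (sum_nonneg fun _ _ => sq_nonneg _)

lemma scoreRange_pos (hkl : k ≠ l) (hnb : 0 < nbar f) : 0 < scoreRange f := by
  by_contra! hB
  have hb (i : Fin M) : workerRange f i = 0 :=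
    le_antisymm ((workerRange_le_scoreRange f i hkl).trans hB) (workerRange_nonneg f i hkl)
  simpa [nbar_sq, hb] using pow_pos hnb 2

lemma cConst_eq_scoreRange_div : cConst f = scoreRange f / nbar f :=
  one_div_mul_eq_div _ _

lemma abs_sub_le_of_forall_succ (hf0 : ∀ i k k', f i k 0 = f i k' 0) (i : Fin M) {R : ℝ}
    (hR : ∀ h : Fin L, |f i l h.succ - f i k h.succ| ≤ R) (x : Fin (L + 1)) :
    |f i l x - f i k x| ≤ R := by
  cases x using Fin.cases with
  | zero => rw [hf0 i l k, sub_self, abs_zero]; exact (abs_nonneg _).trans (hR k)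
  | succ h => exact hR h

variable (a : Fin L → ℝ) (q : Fin M → Fin N → ℝ) (p : Fin M → Fin L → Fin L → ℝ)
  (j : Fin N)

lemma tauMin_mul_nbar_le_gap (hkl : k ≠ l) (hnb : 0 < nbar f) :
    tauMin f a q p j * nbar f ≤ gap f a q p j k l := by
  refine (le_div_iff₀ hnb).1 (csInf_le ?_ ⟨k, l, hkl, rfl⟩)
  exact ((Set.finite_range fun z : Fin L × Fin L => gap f a q p j z.1 z.2 / nbar f).subset
    (by rintro x ⟨k, l, -, rfl⟩; exact ⟨(k, l), rfl⟩)).bddBelow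

lemma tauMin_eq_zero_of_nbar_eq_zero (hkl : k ≠ l) (hnb : nbar f = 0) :
    tauMin f a q p j = 0 := by
  have hset : {x : ℝ | ∃ k l : Fin L, k ≠ l ∧ x = gap f a q p j k l / nbar f} = {0} := by
    ext x
    simp only [hnb, div_zero, Set.mem_ofPred_eq, Set.mem_singleton_iff]
    exact ⟨fun ⟨_, _, _, hx⟩ => hx, fun hx => ⟨k, l, hkl, hx⟩⟩
  rw [tauMin, hset, csInf_singleton]

lemma sum_sq_le_sigmaSq_mul (hkl : k ≠ l) (hnb : 0 < nbar f) :
    ∑ i, ∑ h : Fin L, q i j * (f i k h.succ - f i l h.succ) ^ 2 * p i k h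
      ≤ sigmaSq f q p * nbar f ^ 2 := by
  rw [sigmaSq, one_div_mul_eq_div, div_mul_cancel₀ _ (pow_pos hnb 2).ne']
  refine le_csSup ?_ ⟨j, k, l, hkl, rfl⟩
  exact ((Set.finite_range fun z : Fin N × Fin L × Fin L =>
      ∑ i, ∑ h : Fin L, q i z.1 * (f i z.2.1 h.succ - f i z.2.2 h.succ) ^ 2 * p i z.2.1 h).subset
    (by rintro x ⟨j, k, l, -, rfl⟩; exact ⟨(j, k, l), rfl⟩)).bddAbove

namespace HasDawidSkeneLaw

variable {f a q p j} {μ : Measure Ω} [IsFiniteMeasure μ] {y : Fin N → Ω → Fin L}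
  {Z : Fin M → Fin N → Ω → Fin (L + 1)} {pri : Fin L → ℝ}

lemma measureReal_outscoredEvent_le (hDS : HasDawidSkeneLaw μ y Z pri q p)
    (hf0 : ∀ i k k', f i k 0 = f i k' 0) (k l : Fin L) {t : ℝ} (ht : 0 ≤ t) (R : Fin M → ℝ)
    (hR : ∀ i, ∑ x, condLaw q p i j k x * exp (t * (f i l x - f i k x))
      ≤ exp (t * ∑ x, condLaw q p i j k x * (f i l x - f i k x) + R i)) :
    μ.real (outscoredEvent y Z f a j k l) ≤ pri k * exp (-(t * gap f a q p j k l) + ∑ i, R i) := by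
  have hset : outscoredEvent y Z f a j k l = {ω | ω ∈ {ω | y j ω = k} ∧
      a k - a l ≤ ∑ i, (f i l (Z i j ω) - f i k (Z i j ω))} := by
    ext ω
    simp only [outscoredEvent, Set.mem_ofPred_eq, sum_sub_distrib]
    exact and_congr_right fun _ => by constructor <;> intro h <;> linarith
  have hmean : ∑ i, ∑ x, condLaw q p i j k x * (f i l x - f i k x)
      = -gap f a q p j k l + (a k - a l) := by
    rw [gap, neg_add, neg_add_cancel_right, ← sum_neg_distrib]
    refine sum_congr rfl fun i _ => ?_
    rw [sum_condLaw_mul q p i j k (by simp [hf0 i l k]), ← sum_neg_distrib]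
    exact sum_congr rfl fun h _ => by ring
  calc μ.real (outscoredEvent y Z f a j k l)
      ≤ pri k * exp (-(t * (a k - a l))) *
          ∏ i, ∑ x, condLaw q p i j k x * exp (t * (f i l x - f i k x)) := by
        rw [hset]
        exact measureReal_sum_ge_le_prod_sum_mul_exp μ (A := {ω | y j ω = k})
          (hDS.measurable_y j (measurableSet_singleton k))
          (fun i => hDS.measurable_Z i j) (hDS.measureReal_eq j k)
          (fun i x => f i l x - f i k x) (a k - a l) ht
    _ ≤ pri k * exp (-(t * (a k - a l))) *
          ∏ i, exp (t * ∑ x, condLaw q p i j k x * (f i l x - f i k x) + R i) := by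
        refine mul_le_mul_of_nonneg_left (prod_le_prod (fun i _ => ?_) fun i _ => hR i)
          (mul_nonneg (hDS.pri_nonneg k) (exp_pos _).le)
        exact sum_nonneg fun x _ => mul_nonneg (hDS.condLaw_nonneg i j k x) (exp_pos _).le
    _ = pri k * exp (-(t * gap f a q p j k l) + ∑ i, R i) := by
        rw [mul_assoc, ← exp_sum, ← exp_add, sum_add_distrib, ← mul_sum, hmean]
        ring_nf

lemma measureReal_outscoredEvent_le_hoeffding (hDS : HasDawidSkeneLaw μ y Z pri q p)
    (hf0 : ∀ i k k', f i k 0 = f i k' 0) (hkl : k ≠ l) (hnb : 0 < nbar f)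
    (ht : 0 ≤ tauMin f a q p j) :
    μ.real (outscoredEvent y Z f a j k l) ≤ pri k * exp (-(tauMin f a q p j) ^ 2 / 2) := by
  set t := tauMin f a q p j
  set lam := t / nbar f
  have hlam : 0 ≤ lam := div_nonneg ht hnb.le
  refine (hDS.measureReal_outscoredEvent_le hf0 k l hlam
    (fun i => lam ^ 2 * workerRange f i ^ 2 / 2)
    fun i => sum_mul_exp_le_of_abs_le (hDS.condLaw_nonneg i j k) (hDS.sum_condLaw i j k)
      (abs_sub_le_of_forall_succ f hf0 i (abs_sub_le_workerRange f i hkl.symm)) lam).trans ?_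
  refine mul_le_mul_of_nonneg_left (exp_le_exp.2 ?_) (hDS.pri_nonneg k)
  have hgap : lam * (t * nbar f) ≤ lam * gap f a q p j k l :=
    mul_le_mul_of_nonneg_left (tauMin_mul_nbar_le_gap f a q p j hkl hnb) hlam
  have hsum : ∑ i, lam ^ 2 * workerRange f i ^ 2 / 2 = t ^ 2 / 2 := by
    rw [← sum_div, ← mul_sum, ← nbar_sq]; simp only [lam]; field_simp
  have hlt : lam * (t * nbar f) = t ^ 2 := by simp only [lam]; field_simp
  linarith

lemma measureReal_outscoredEvent_le_bernstein (hDS : HasDawidSkeneLaw μ y Z pri q p)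
    (hf0 : ∀ i k k', f i k 0 = f i k' 0) (hkl : k ≠ l) (hnb : 0 < nbar f)
    (ht : 0 ≤ tauMin f a q p j)
    (hd : 0 < sigmaSq f q p + cConst f * tauMin f a q p j / 3) :
    μ.real (outscoredEvent y Z f a j k l) ≤ pri k * exp (-(tauMin f a q p j) ^ 2 /
      (2 * (sigmaSq f q p + cConst f * tauMin f a q p j / 3))) := by
  set lam := tauMin f a q p j / (nbar f * (sigmaSq f q p + cConst f * tauMin f a q p j / 3))
  have hB : 0 < scoreRange f := scoreRange_pos f hkl hnb
  have hlam : 0 ≤ lam := div_nonneg ht (mul_pos hnb hd).le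
  refine (hDS.measureReal_outscoredEvent_le hf0 k l hlam
    (fun i => (∑ x, condLaw q p i j k x * (f i l x - f i k x) ^ 2) *
      (exp (lam * scoreRange f) - 1 - lam * scoreRange f) / scoreRange f ^ 2)
    fun i => sum_mul_exp_le_of_le (hDS.condLaw_nonneg i j k) (hDS.sum_condLaw i j k) hB hlam
      fun x => (le_abs_self _).trans
        (abs_sub_le_of_forall_succ f hf0 i (abs_sub_le_scoreRange f i hkl.symm) x)).trans ?_
  refine mul_le_mul_of_nonneg_left (exp_le_exp.2 ?_) (hDS.pri_nonneg k)
  have hvar : ∑ i, ∑ x, condLaw q p i j k x * (f i l x - f i k x) ^ 2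
      ≤ sigmaSq f q p * nbar f ^ 2 := by
    refine le_of_eq_of_le (sum_congr rfl fun i _ => ?_) (sum_sq_le_sigmaSq_mul f q p j hkl hnb)
    rw [sum_condLaw_mul q p i j k (by simp [hf0 i l k])]
    exact sum_congr rfl fun h _ => by ring
  rw [← sum_div, ← sum_mul]
  exact neg_mul_add_mul_exp_sub_le hnb hB (by rw [cConst_eq_scoreRange_div]; field_simp) ht hd
    (tauMin_mul_nbar_le_gap f a q p j hkl hnb) hvar

lemma measureReal_outscoredEvent_le_min (hDS : HasDawidSkeneLaw μ y Z pri q p)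
    (hf0 : ∀ i k k', f i k 0 = f i k' 0) (hkl : k ≠ l) (ht : 0 ≤ tauMin f a q p j) :
    μ.real (outscoredEvent y Z f a j k l) ≤ pri k * min
      (exp (-(tauMin f a q p j) ^ 2 / 2))
      (exp (-(tauMin f a q p j) ^ 2 /
        (2 * (sigmaSq f q p + cConst f * tauMin f a q p j / 3)))) := by
  rcases (show 0 ≤ nbar f from Real.sqrt_nonneg _).eq_or_lt with hnb | hnb
  · rw [tauMin_eq_zero_of_nbar_eq_zero f a q p j hkl hnb.symm]
    simpa using hDS.measureReal_outscoredEvent_le (a := a) hf0 k l le_rfl 0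
      fun i => by simp [hDS.sum_condLaw i j k]
  have hhoeffding := hDS.measureReal_outscoredEvent_le_hoeffding hf0 hkl hnb ht
  rw [mul_min_of_nonneg _ _ (hDS.pri_nonneg k)]
  refine le_min hhoeffding ?_
  by_cases hd : 0 < sigmaSq f q p + cConst f * tauMin f a q p j / 3
  · exact hDS.measureReal_outscoredEvent_le_bernstein hf0 hkl hnb ht hd
  · refine hhoeffding.trans (mul_le_mul_of_nonneg_left (exp_le_exp.2 ?_) (hDS.pri_nonneg k))
    have := div_nonneg_of_nonpos (neg_nonpos.2 (sq_nonneg (tauMin f a q p j)))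
      (by linarith : 2 * (sigmaSq f q p + cConst f * tauMin f a q p j / 3) ≤ 0)
    linarith [sq_nonneg (tauMin f a q p j)]

end HasDawidSkeneLaw

end CrowdDS

theorem item_error_prob_upper_bound
    {Ω : Type*} [MeasurableSpace Ω] (μ : Measure Ω) [IsProbabilityMeasure μ]
    {M N L : ℕ}
    (y : Fin N → Ω → Fin L) (Z : Fin M → Fin N → Ω → Fin (L + 1))
    (hym : ∀ j, Measurable (y j)) (hZm : ∀ i j, Measurable (Z i j))
    (pri : Fin L → ℝ) (q : Fin M → Fin N → ℝ) (p : Fin M → Fin L → Fin L → ℝ)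
    (hpri : ∀ k, 0 ≤ pri k) (hq0 : ∀ i j, 0 ≤ q i j) (hq1 : ∀ i j, q i j ≤ 1)
    (hp0 : ∀ i k h, 0 ≤ p i k h) (hp1 : ∀ i k, ∑ h, p i k h = 1)
    (hprior : ∀ (j : Fin N) (k : Fin L), (μ {ω | y j ω = k}).toReal = pri k)
    (hlaw : ∀ (j : Fin N) (k : Fin L) (h : Fin M → Fin (L + 1)),
      (μ {ω | y j ω = k ∧ ∀ i, Z i j ω = h i}).toReal
        = pri k * ∏ i, CrowdDS.condLaw q p i j k (h i))
    (f : Fin M → Fin L → Fin (L + 1) → ℝ) (hf0 : ∀ i k k', f i k 0 = f i k' 0)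
    (a : Fin L → ℝ)
    (yhat : Fin N → Ω → Fin L)
    (hyhat : ∀ (j : Fin N) (ω : Ω) (k : Fin L),
      (∑ i, f i k (Z i j ω)) + a k ≤ (∑ i, f i (yhat j ω) (Z i j ω)) + a (yhat j ω))
    (j : Fin N) (ht : 0 ≤ CrowdDS.tauMin f a q p j) :
    (μ {ω | yhat j ω ≠ y j ω}).toReal
      ≤ ((L : ℝ) - 1) * min
          (Real.exp (-(CrowdDS.tauMin f a q p j) ^ 2 / 2))
          (Real.exp (-(CrowdDS.tauMin f a q p j) ^ 2 /
            (2 * (CrowdDS.sigmaSq f q p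
              + CrowdDS.cConst f * CrowdDS.tauMin f a q p j / 3)))) := by
  have hDS : CrowdDS.HasDawidSkeneLaw μ y Z pri q p := ⟨hym, hZm, hpri, hq0, hq1, hp0, hp1, hlaw⟩
  have h := measureReal_ne_le_card_sub_one_mul μ (hym j)
    (fun k l => CrowdDS.outscoredEvent y Z f a j k l) (fun ω hω => ⟨rfl, hyhat j ω (y j ω)⟩)
    fun k l hkl => by
      rw [show μ.real (y j ⁻¹' {k}) = pri k from hprior j k]
      exact hDS.measureReal_outscoredEvent_le_min hf0 hkl ht
  rw [Fintype.card_fin] at h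
  exact h
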